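/- arXiv:1712.08799 — 2 statements merged into one kernel-verified Lean document; each statement's English description precedes it below -/
import Mathlib

section
/- For every real number a > 0, the sequence y_n = 1/a + 1/(a+1) + ... + 1/(a+n-1) - ln((a+n-1)/a) converges as n → ∞ to ln(a) - ψ(a), where ψ is the digamma function. -/
/-!
`log ∘ Γ` is convex on `(0, ∞)` (Bohr–Mollerup) with derivative `ψ`, and
`log Γ(x + 1) - log Γ(x) = log x`. Comparing `ψ(x + 1)` with the slopes of `log ∘ Γ` on
`[x, x + 1]` and `[x + 1, x + 2]` gives `log x ≤ ψ(x + 1) ≤ log (x + 1)`, so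
`ψ(x + 1) - log x → 0`. The recurrence `ψ(x + 1) = ψ(x) + 1/x` turns the partial sum into
`ψ(a + n) - ψ(a)`, so `y_n = ψ(a + n) - log (a + n - 1) + log a - ψ(a)`.
-/

open Real Filter Topology Set

noncomputable def digamma (x : ℝ) : ℝ := deriv Real.Gamma x / Real.Gamma x

noncomputable def trigamma (x : ℝ) : ℝ := deriv digamma x

lemma forall_ne_neg_natCast_of_pos {x : ℝ} (hx : 0 < x) : ∀ m : ℕ, x ≠ -m :=
  fun m => (neg_nonpos.mpr m.cast_nonneg).trans_lt hx |>.ne'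

lemma hasDerivAt_log_Gamma {x : ℝ} (hx : ∀ m : ℕ, x ≠ -m) :
    HasDerivAt (log ∘ Gamma) (digamma x) x :=
  (differentiableAt_Gamma hx).hasDerivAt.log (Gamma_ne_zero hx)

lemma log_Gamma_add_one {x : ℝ} (hx : ∀ m : ℕ, x ≠ -m) :
    log (Gamma (x + 1)) = log (Gamma x) + log x := by
  have hx0 : x ≠ 0 := by simpa using hx 0
  rw [Gamma_add_one hx0, log_mul hx0 (Gamma_ne_zero hx), add_comm]

lemma digamma_add_one {x : ℝ} (hx : ∀ m : ℕ, x ≠ -m) :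
    digamma (x + 1) = digamma x + x⁻¹ := by
  have hx1 : ∀ m : ℕ, x + 1 ≠ -m := fun m h => hx (m + 1) (by push_cast; linarith)
  have hshift : HasDerivAt (fun y => log (Gamma (y + 1))) (digamma (x + 1)) x :=
    (hasDerivAt_log_Gamma hx1).comp_add_const x 1
  have hsum : HasDerivAt (fun y => log (Gamma y) + log y) (digamma x + x⁻¹) x :=
    (hasDerivAt_log_Gamma hx).add (hasDerivAt_log (by simpa using hx 0))
  have hpoles : ∀ᶠ y in 𝓝 x, ∀ m : ℕ, y ≠ -(m : ℝ) := by
    filter_upwards [(differentiableAt_Gamma hx).continuousAt.eventually_ne (Gamma_ne_zero hx)]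
      with y hy m hm
    exact hy (hm ▸ Gamma_neg_nat_eq_zero m)
  refine hshift.unique (hsum.congr_of_eventuallyEq ?_)
  filter_upwards [hpoles] with y hy using log_Gamma_add_one hy

lemma digamma_add_nat {x : ℝ} (hx : ∀ m : ℕ, x ≠ -m) (n : ℕ) :
    digamma (x + n) = digamma x + ∑ k ∈ Finset.range n, (x + k)⁻¹ := by
  induction n with
  | zero => simp
  | succ n ih =>
    have hxn : ∀ m : ℕ, x + n ≠ -m := fun m h => hx (m + n) (by push_cast; linarith)
    rw [Nat.cast_succ, ← add_assoc, digamma_add_one hxn, ih, Finset.sum_range_succ, add_assoc]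

lemma slope_log_Gamma_add_one {x : ℝ} (hx : 0 < x) :
    slope (log ∘ Gamma) x (x + 1) = log x := by
  rw [slope_def_field, add_sub_cancel_left, div_one, Function.comp_apply, Function.comp_apply,
    log_Gamma_add_one (forall_ne_neg_natCast_of_pos hx), add_sub_cancel_left]

lemma digamma_le_log {x : ℝ} (hx : 0 < x) : digamma x ≤ log x := by
  have hd := hasDerivAt_log_Gamma (forall_ne_neg_natCast_of_pos hx)
  rw [← slope_log_Gamma_add_one hx, ← hd.deriv]
  exact convexOn_log_Gamma.deriv_le_slope hx (mem_Ioi.mpr (by linarith)) (lt_add_one x)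
    hd.differentiableAt

lemma log_le_digamma_add_one {x : ℝ} (hx : 0 < x) : log x ≤ digamma (x + 1) := by
  have hd := hasDerivAt_log_Gamma (forall_ne_neg_natCast_of_pos (x := x + 1) (by linarith))
  rw [← slope_log_Gamma_add_one hx, ← hd.deriv]
  exact convexOn_log_Gamma.slope_le_deriv hx (mem_Ioi.mpr (by linarith)) (lt_add_one x)
    hd.differentiableAt

lemma tendsto_digamma_add_one_sub_log :
    Tendsto (fun x => digamma (x + 1) - log x) atTop (𝓝 0) := by
  refine squeeze_zero' ?_ ?_ (tendsto_log_comp_add_sub_log 1)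
  · filter_upwards [eventually_gt_atTop 0] with x hx
    exact sub_nonneg.mpr (log_le_digamma_add_one hx)
  · filter_upwards [eventually_gt_atTop 0] with x hx
    exact sub_le_sub_right (digamma_le_log (by linarith)) _

theorem yn_tendsto (a : ℝ) (ha : 0 < a) :
    Tendsto (fun n : ℕ =>
        (∑ k ∈ Finset.range n, 1 / (a + k)) - Real.log ((a + n - 1) / a))
      atTop (𝓝 (Real.log a - digamma a)) := by
  have hshift : Tendsto (fun n : ℕ => a + n - 1) atTop atTop :=
    tendsto_atTop_add_const_right _ _ (tendsto_atTop_add_const_left _ _ tendsto_natCast_atTop_atTop)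
  have hlim := (tendsto_digamma_add_one_sub_log.comp hshift).add_const (log a - digamma a)
  rw [zero_add] at hlim
  refine hlim.congr' ?_
  filter_upwards [eventually_ge_atTop 1] with n hn
  have hpos : 0 < a + n - 1 := by
    have : (1 : ℝ) ≤ n := by exact_mod_cast hn
    linarith
  simp only [Function.comp_apply, sub_add_cancel, one_div,
    digamma_add_nat (forall_ne_neg_natCast_of_pos ha), log_div hpos.ne' ha.ne']
  ring
end

section
/- For every integer n ≥ 1, 1/(2n) - 1/(12n²) < γ_n - γ ≤ 1/(2n) - (γ - 1/2)/n², where γ_n = 1 + 1/2 + ... + 1/n - ln(n) and γ is the Euler-Mascheroni constant; the constants 1/12 and γ - 1/2 are best possible. -/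
/-!
With `x = 1/n` one has `1/(n+1) = x/(1+x)` and `γ_n - γ_{n+1} = log (1 + x) - x/(1+x)`.
Hence if a function `p` with `p 0 = 0` satisfies
`p x - p (x/(1+x)) < log (1 + x) - x/(1+x)` for `0 < x ≤ 1/2`, the sequence `γ_n - p (1/n)`
strictly decreases from `n = 2` on; it tends to `γ`, so `γ < γ_n - p (1/n)`. The reversed
one-step inequality gives `γ_n - p (1/n) ≤ γ`. We take for `p` the first terms
`x/2 - x²/12` and `x/2 - x²/12 + x⁴/120` of the asymptotic expansion of `γ_n - γ`; the
one-step inequalities reduce to alternating Taylor bounds for `log (1 + x)`.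

The case `n = 2` of the lower bound gives `γ < 61/48 - log 2 < 0.578`, which settles `n = 1`
and, as `x⁴/120 ≤ x²/480` for `x ≤ 1/2`, turns the upper bound into `1/(2n) - (γ - 1/2)/n²`.
The term `x⁴/120` also shows that no constant below `1/12` works in the lower bound.
-/

open Real Filter Topology Set

theorem hasDerivAt_log_one_add_sub_taylor (n : ℕ) {t : ℝ} (ht : -1 < t) :
    HasDerivAt (fun s => log (1 + s) - ∑ k ∈ Finset.range n, (-1) ^ k * s ^ (k + 1) / (k + 1))
      ((-t) ^ n / (1 + t)) t := by
  have h1t : 1 + t ≠ 0 := by linarith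
  have hlog : HasDerivAt (fun s => log (1 + s)) (1 / (1 + t)) t := by
    simpa using ((hasDerivAt_id t).const_add 1).log h1t
  have hsum : HasDerivAt (fun s : ℝ => ∑ k ∈ Finset.range n, (-1) ^ k * s ^ (k + 1) / (k + 1))
      (∑ k ∈ Finset.range n, (-t) ^ k) t := by
    refine HasDerivAt.fun_sum fun k _ => ?_
    refine (((hasDerivAt_pow (k + 1) t).const_mul ((-1 : ℝ) ^ k)).div_const
      ((k : ℝ) + 1)).congr_deriv ?_
    rw [Nat.add_sub_cancel, Nat.cast_succ, neg_eq_neg_one_mul t, mul_pow]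
    field_simp
  refine (hlog.sub hsum).congr_deriv ?_
  have hgeom : ∑ k ∈ Finset.range n, (-t) ^ k = (1 - (-t) ^ n) / (1 + t) := by
    rw [eq_div_iff h1t]
    linear_combination mul_neg_geom_sum (-t) n
  rw [hgeom]
  ring

theorem neg_one_pow_mul_log_one_add_sub_taylor_nonneg (n : ℕ) {x : ℝ} (hx : 0 ≤ x) :
    0 ≤ (-1) ^ n * (log (1 + x) - ∑ k ∈ Finset.range n, (-1) ^ k * x ^ (k + 1) / (k + 1)) := by
  let f := fun s : ℝ =>
    (-1) ^ n * (log (1 + s) - ∑ k ∈ Finset.range n, (-1) ^ k * s ^ (k + 1) / (k + 1))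
  have hf : ∀ t ∈ Ici (0 : ℝ), HasDerivAt f (t ^ n / (1 + t)) t := fun t ht => by
    have := (hasDerivAt_log_one_add_sub_taylor n (t := t) (by simp at ht; linarith)).const_mul
      ((-1 : ℝ) ^ n)
    rwa [mul_div_assoc', ← mul_pow, neg_one_mul, neg_neg] at this
  have hmono : MonotoneOn f (Ici 0) :=
    monotoneOn_of_hasDerivWithinAt_nonneg (convex_Ici 0)
      (fun t ht => (hf t ht).continuousAt.continuousWithinAt)
      (fun t ht => (hf t (interior_subset ht)).hasDerivWithinAt)
      (fun t ht => by
        rw [interior_Ici, Set.mem_Ioi] at ht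
        positivity)
  simpa [f] using hmono self_mem_Ici hx hx

theorem sub_lt_log_one_add_sub_div_one_add {x : ℝ} (hx0 : 0 < x) (hx : x ≤ 1 / 2) :
    (x / 2 - x ^ 2 / 12) - ((x / (1 + x)) / 2 - (x / (1 + x)) ^ 2 / 12) <
      log (1 + x) - x / (1 + x) := by
  have hlog := neg_one_pow_mul_log_one_add_sub_taylor_nonneg 8 hx0.le
  norm_num [Finset.sum_range_succ] at hlog
  have hpoly : 0 < 1/30 - x/60 + x^2/105 - x^3/168 - 3/28*x^4 - x^5/8 := by
    have e3 : x^3 ≤ (1/2)^3 := pow_le_pow_left₀ hx0.le hx 3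
    have e4 : x^4 ≤ (1/2)^4 := pow_le_pow_left₀ hx0.le hx 4
    have e5 : x^5 ≤ (1/2)^5 := pow_le_pow_left₀ hx0.le hx 5
    nlinarith [sq_nonneg x]
  have hfactor : (x - x^2/2 + x^3/3 - x^4/4 + x^5/5 - x^6/6 + x^7/7 - x^8/8)
      - ((x / 2 - x ^ 2 / 12) - ((x / (1 + x)) / 2 - (x / (1 + x)) ^ 2 / 12) + x / (1 + x))
      = x^5 * (1/30 - x/60 + x^2/105 - x^3/168 - 3/28*x^4 - x^5/8) / (1 + x)^2 := by
    field_simp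
    ring
  have : 0 < x^5 * (1/30 - x/60 + x^2/105 - x^3/168 - 3/28*x^4 - x^5/8) / (1 + x)^2 := by
    positivity
  linarith

theorem log_one_add_sub_div_one_add_le_sub {x : ℝ} (hx0 : 0 < x) (hx : x ≤ 1 / 2) :
    log (1 + x) - x / (1 + x) ≤
      (x / 2 - x ^ 2 / 12 + x ^ 4 / 120) -
        ((x / (1 + x)) / 2 - (x / (1 + x)) ^ 2 / 12 + (x / (1 + x)) ^ 4 / 120) := by
  have hlog := neg_one_pow_mul_log_one_add_sub_taylor_nonneg 11 hx0.le
  norm_num [Finset.sum_range_succ] at hlog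
  have hpoly : 0 ≤ 1/42 + x/84 - 1/630*x^2 + x^3/1260 - 1/2310*x^4 - 329/3960*x^5
      - 127/495*x^6 - 29/110*x^7 - 1/11*x^8 := by
    have e2 : x^2 ≤ (1/2)^2 := pow_le_pow_left₀ hx0.le hx 2
    have e4 : x^4 ≤ (1/2)^4 := pow_le_pow_left₀ hx0.le hx 4
    have e5 : x^5 ≤ (1/2)^5 := pow_le_pow_left₀ hx0.le hx 5
    have e6 : x^6 ≤ (1/2)^6 := pow_le_pow_left₀ hx0.le hx 6
    have e7 : x^7 ≤ (1/2)^7 := pow_le_pow_left₀ hx0.le hx 7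
    have e8 : x^8 ≤ (1/2)^8 := pow_le_pow_left₀ hx0.le hx 8
    have hx3 : 0 ≤ x^3 := by positivity
    nlinarith
  have hfactor : ((x / 2 - x ^ 2 / 12 + x ^ 4 / 120) -
        ((x / (1 + x)) / 2 - (x / (1 + x)) ^ 2 / 12 + (x / (1 + x)) ^ 4 / 120) + x / (1 + x))
      - (x - x^2/2 + x^3/3 - x^4/4 + x^5/5 - x^6/6 + x^7/7 - x^8/8 + x^9/9 - x^10/10 + x^11/11)
      = x^7 * (1/42 + x/84 - 1/630*x^2 + x^3/1260 - 1/2310*x^4 - 329/3960*x^5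
        - 127/495*x^6 - 29/110*x^7 - 1/11*x^8) / (1 + x)^4 := by
    field_simp
    ring
  have : 0 ≤ x^7 * (1/42 + x/84 - 1/630*x^2 + x^3/1260 - 1/2310*x^4 - 329/3960*x^5
        - 127/495*x^6 - 29/110*x^7 - 1/11*x^8) / (1 + x)^4 := by
    positivity
  linarith

theorem lt_of_tendsto_of_succ_lt {α : Type*} [TopologicalSpace α] [Preorder α]
    [OrderClosedTopology α] {u : ℕ → α} {a : α} {N : ℕ} (h : ∀ n, N ≤ n → u (n + 1) < u n)
    (hu : Tendsto u atTop (𝓝 a)) {n : ℕ} (hn : N ≤ n) : a < u n := by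
  obtain ⟨k, rfl⟩ := Nat.exists_eq_add_of_le' hn
  have hanti : StrictAnti fun k => u (k + N) :=
    strictAnti_nat_of_succ_lt fun k => by
      simpa only [add_right_comm] using h (k + N) (Nat.le_add_left N k)
  exact (hanti.antitone.le_of_tendsto ((tendsto_add_atTop_iff_nat N).mpr hu) (k + 1)).trans_lt
    (hanti k.lt_succ_self)

theorem le_of_tendsto_of_le_succ {α : Type*} [TopologicalSpace α] [Preorder α]
    [OrderClosedTopology α] {u : ℕ → α} {a : α} {N : ℕ} (h : ∀ n, N ≤ n → u n ≤ u (n + 1))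
    (hu : Tendsto u atTop (𝓝 a)) {n : ℕ} (hn : N ≤ n) : u n ≤ a := by
  obtain ⟨k, rfl⟩ := Nat.exists_eq_add_of_le' hn
  have hmono : Monotone fun k => u (k + N) :=
    monotone_nat_of_le_succ fun k => by
      simpa only [add_right_comm] using h (k + N) (Nat.le_add_left N k)
  exact hmono.ge_of_tendsto ((tendsto_add_atTop_iff_nat N).mpr hu) k

theorem harmonic_sub_log_sub_succ {n : ℕ} (hn : n ≠ 0) :
    ((harmonic n : ℝ) - log n) - (harmonic (n + 1) - log (n + 1 : ℕ)) =
      log (1 + 1 / n) - 1 / (n + 1 : ℕ) := by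
  have hn' : (n : ℝ) ≠ 0 := Nat.cast_ne_zero.mpr hn
  have hsucc : 1 + 1 / (n : ℝ) = (n + 1) / n := by field_simp
  rw [harmonic_succ, hsucc, log_div (by positivity) hn']
  push_cast
  field_simp
  ring

theorem one_div_natCast_succ {n : ℕ} (hn : n ≠ 0) :
    (1 : ℝ) / (n + 1 : ℕ) = (1 / n) / (1 + 1 / n) := by
  have hn' : (n : ℝ) ≠ 0 := Nat.cast_ne_zero.mpr hn
  push_cast
  field_simp

theorem one_div_natCast_le_half {n : ℕ} (hn : 2 ≤ n) : (1 : ℝ) / n ≤ 1 / 2 := by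
  gcongr
  exact_mod_cast hn

section OneStepComparison

variable {p : ℝ → ℝ}

theorem tendsto_harmonic_sub_log_sub_comp_one_div (hp : ContinuousAt p 0) (hp0 : p 0 = 0) :
    Tendsto (fun n : ℕ => (harmonic n : ℝ) - log n - p (1 / n)) atTop
      (𝓝 eulerMascheroniConstant) := by
  simpa [hp0] using
    tendsto_harmonic_sub_log.sub (hp.tendsto.comp tendsto_one_div_atTop_nhds_zero_nat)

theorem eulerMascheroniConstant_lt_of_forall_sub_lt (hp : ContinuousAt p 0) (hp0 : p 0 = 0)
    (hstep : ∀ x, 0 < x → x ≤ 1 / 2 → p x - p (x / (1 + x)) < log (1 + x) - x / (1 + x))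
    {n : ℕ} (hn : 2 ≤ n) :
    eulerMascheroniConstant < harmonic n - log n - p (1 / n) := by
  refine lt_of_tendsto_of_succ_lt (fun m hm => ?_)
    (tendsto_harmonic_sub_log_sub_comp_one_div hp hp0) hn
  have hm0 : m ≠ 0 := by omega
  have := hstep (1 / m) (by positivity) (one_div_natCast_le_half hm)
  rw [← one_div_natCast_succ hm0, ← harmonic_sub_log_sub_succ hm0] at this
  linarith

theorem le_eulerMascheroniConstant_of_forall_le_sub (hp : ContinuousAt p 0) (hp0 : p 0 = 0)
    (hstep : ∀ x, 0 < x → x ≤ 1 / 2 → log (1 + x) - x / (1 + x) ≤ p x - p (x / (1 + x)))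
    {n : ℕ} (hn : 2 ≤ n) :
    harmonic n - log n - p (1 / n) ≤ eulerMascheroniConstant := by
  refine le_of_tendsto_of_le_succ (fun m hm => ?_)
    (tendsto_harmonic_sub_log_sub_comp_one_div hp hp0) hn
  have hm0 : m ≠ 0 := by omega
  have := hstep (1 / m) (by positivity) (one_div_natCast_le_half hm)
  rw [← one_div_natCast_succ hm0, ← harmonic_sub_log_sub_succ hm0] at this
  linarith

end OneStepComparison

theorem lt_harmonic_sub_log_sub_eulerMascheroniConstant {n : ℕ} (hn : 2 ≤ n) :
    1 / (2 * n) - 1 / (12 * n ^ 2) < harmonic n - log n - eulerMascheroniConstant := by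
  have := eulerMascheroniConstant_lt_of_forall_sub_lt (p := fun x => x / 2 - x ^ 2 / 12)
    (by fun_prop) (by norm_num) (fun _ => sub_lt_log_one_add_sub_div_one_add) hn
  have hp : (1 : ℝ) / n / 2 - (1 / n) ^ 2 / 12 = 1 / (2 * n) - 1 / (12 * n ^ 2) := by ring
  linarith

theorem eulerMascheroniConstant_lt_0_578 : eulerMascheroniConstant < 0.578 := by
  have h := lt_harmonic_sub_log_sub_eulerMascheroniConstant le_rfl
  have h2 : (harmonic 2 : ℝ) = 3 / 2 := by norm_num [harmonic]
  rw [h2] at h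
  norm_num at h
  linarith [log_two_gt_d9]

theorem harmonic_sub_log_sub_eulerMascheroniConstant_le {n : ℕ} (hn : 2 ≤ n) {c : ℝ}
    (hc : c ≤ 1 / 12 - (1 / n) ^ 2 / 120) :
    harmonic n - log n - eulerMascheroniConstant ≤ 1 / (2 * n) - c / n ^ 2 := by
  have := le_eulerMascheroniConstant_of_forall_le_sub
    (p := fun x => x / 2 - x ^ 2 / 12 + x ^ 4 / 120)
    (by fun_prop) (by norm_num) (fun _ => log_one_add_sub_div_one_add_le_sub) hn
  have hx := mul_le_mul_of_nonneg_left hc (sq_nonneg (1 / (n : ℝ)))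
  have h1 : (1 : ℝ) / (2 * n) = 1 / n / 2 := by ring
  have h2 : c / (n : ℝ) ^ 2 = (1 / n) ^ 2 * c := by ring
  rw [h1, h2]
  nlinarith

theorem qiu_vuorinen :
    let g : ℕ → ℝ := fun n => (∑ k ∈ Finset.range n, 1 / (k + 1 : ℝ)) - Real.log n
    let γ : ℝ := Real.eulerMascheroniConstant
    (∀ n : ℕ, 1 ≤ n →
      1 / (2 * n) - 1 / (12 * n ^ 2) < g n - γ ∧
      g n - γ ≤ 1 / (2 * n) - (γ - 1/2) / n ^ 2) ∧
    g 1 - γ = 1 / 2 - (γ - 1/2) ∧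
    (∀ α : ℝ, α < 1/12 → ∃ n : ℕ, 1 ≤ n ∧ g n - γ ≤ 1 / (2 * n) - α / n ^ 2) := by
  intro g γ
  have hg : ∀ n, g n = harmonic n - log n := fun n => by simp [g, harmonic]
  have hg1 : g 1 = 1 := by simp [hg]
  have hγ : γ < 0.578 := eulerMascheroniConstant_lt_0_578
  refine ⟨fun n hn => ?_, by rw [hg1]; ring, fun α hα => ?_⟩
  · rcases hn.eq_or_lt with rfl | hn
    · norm_num [hg1]
      constructor <;> linarith
    · rw [hg]
      refine ⟨lt_harmonic_sub_log_sub_eulerMascheroniConstant hn,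
        harmonic_sub_log_sub_eulerMascheroniConstant_le hn ?_⟩
      have : (1 / (n : ℝ)) ^ 2 ≤ (1 / 2) ^ 2 :=
        pow_le_pow_left₀ (by positivity) (one_div_natCast_le_half hn) 2
      norm_num at this ⊢
      linarith
  · have hlim : Tendsto (fun n : ℕ => 1 / 12 - (1 / (n : ℝ)) ^ 2 / 120) atTop (𝓝 (1 / 12)) := by
      simpa using tendsto_const_nhds.sub
        ((((continuous_pow 2).div_const (120 : ℝ)).tendsto' 0 0 (by simp)).comp
          tendsto_one_div_atTop_nhds_zero_nat)
    obtain ⟨n, hn, hαn⟩ := ((eventually_ge_atTop 2).and (hlim.eventually (lt_mem_nhds hα))).exists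
    exact ⟨n, by omega, (hg n).symm ▸ harmonic_sub_log_sub_eulerMascheroniConstant_le hn hαn.le⟩
end
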